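/- arXiv:2312.10481 — 9 statements merged into one kernel-verified Lean document; each statement's English description precedes it below -/
import Mathlib

section
/- Let A be an n-by-n reciprocal matrix and C a Hamiltonian cycle γ_1→⋯→γ_n→γ_1 whose cycle product in A is at most 1. Then there exists a positive vector w such that G(A,w) contains C; i.e., the set ε_A(C) = {w > 0 : G(A,w) contains C} is nonempty. -/
/-!
Walk backwards along the cycle: take `w (γ k)` to be the product of the entries
`A (γ j) (γ (j + 1))` over `j ≥ k`. Every edge of the cycle except the closing one is then
tight, and the closing edge holds exactly because the cycle product is at most `1`.
-/

def Reciprocal {n : ℕ} (A : Matrix (Fin n) (Fin n) ℝ) : Prop :=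
  (∀ i j, 0 < A i j) ∧ ∀ i j, A j i = 1 / A i j

open Finset

theorem Fin.exists_pos_mul_add_one_le_of_prod_le_one {R : Type*} [CommSemiring R]
    [PartialOrder R] [IsStrictOrderedRing R] {n : ℕ} [NeZero n] (p : Fin n → R)
    (hp : ∀ k, 0 < p k) (hprod : ∏ k, p k ≤ 1) :
    ∃ v : Fin n → R, (∀ k, 0 < v k) ∧ ∀ k, p k * v (k + 1) ≤ v k := by
  refine ⟨fun k => ∏ j ∈ Ici k, p j, fun k => prod_pos fun j _ => hp j, fun k => ?_⟩
  dsimp only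
  by_cases hk : (k : ℕ) + 1 < n
  · rw [Fin.Ici_add_one_eq_Ioi hk, mul_prod_Ioi_eq_prod_Ici]
  · have hwrap : k + 1 = 0 := by simp [Fin.ext_iff, Fin.val_add, show (k : ℕ) + 1 = n by omega]
    have hIoi : Ioi k = ∅ := by
      ext j
      simp only [mem_Ioi, Fin.lt_def, notMem_empty, iff_false]
      omega
    calc p k * ∏ j ∈ Ici (k + 1), p j ≤ p k := by
          rw [hwrap, Ici_zero_eq_univ]
          exact mul_le_of_le_one_right (hp k).le hprod
      _ = ∏ j ∈ Ici k, p j := by rw [← mul_prod_Ioi_eq_prod_Ici, hIoi, prod_empty, mul_one]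

/-- If the cycle product of the Hamiltonian cycle `γ` in `A` is at most `1`,
then the set `ε_A(C)` is nonempty. -/
theorem stmt3 {n : ℕ} [NeZero n] (A : Matrix (Fin n) (Fin n) ℝ) (hA : Reciprocal A)
    (γ : Fin n → Fin n) (hγ : Function.Bijective γ)
    (hprod : (∏ k : Fin n, A (γ k) (γ (k + 1))) ≤ 1) :
    ∃ w : Fin n → ℝ, (∀ i, 0 < w i) ∧
      ∀ k : Fin n, A (γ k) (γ (k + 1)) * w (γ (k + 1)) ≤ w (γ k) := by
  obtain ⟨v, hv_pos, hv⟩ :=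
    Fin.exists_pos_mul_add_one_le_of_prod_le_one _ (fun k => hA.1 (γ k) (γ (k + 1))) hprod
  refine ⟨v ∘ (Equiv.ofBijective γ hγ).symm, fun i => hv_pos _, fun k => ?_⟩
  simpa only [Function.comp_apply, Equiv.ofBijective_symm_apply_apply] using hv k
end

section
/- Let A be an n-by-n reciprocal matrix and C a Hamiltonian cycle whose cycle product in A is strictly less than 1. Then ε_A(C) contains two non-proportional vectors; i.e., ε_A(C) is not a singleton up to scaling. -/
/-- If the cycle product of the Hamiltonian cycle `γ` in `A` is strictly less
than `1`, then `ε_A(C)` contains two non-proportional vectors. -/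
theorem stmt7 {n : ℕ} [NeZero n] (A : Matrix (Fin n) (Fin n) ℝ) (hA : Reciprocal A)
    (γ : Fin n → Fin n) (hγ : Function.Bijective γ)
    (hprod : (∏ k : Fin n, A (γ k) (γ (k + 1))) < 1) :
    ∃ u v : Fin n → ℝ,
      (∀ i, 0 < u i) ∧ (∀ i, 0 < v i) ∧
      (∀ k : Fin n, A (γ k) (γ (k + 1)) * u (γ (k + 1)) ≤ u (γ k)) ∧
      (∀ k : Fin n, A (γ k) (γ (k + 1)) * v (γ (k + 1)) ≤ v (γ k)) ∧
      ∀ c : ℝ, ¬ (∀ i, u i = c * v i) := by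
  have hn0 : 0 < n := NeZero.pos n
  have hdiag : ∀ i, A i i = 1 := by
    intro i
    have h := hA.2 i i
    have hp := hA.1 i i
    field_simp at h
    nlinarith
  rcases Nat.lt_or_ge n 2 with h1 | h2
  · -- n = 1 : contradiction with hprod
    exfalso
    have hn : n = 1 := by omega
    subst hn
    rw [Fin.prod_univ_one, Subsingleton.elim ((0 : Fin 1) + 1) 0, hdiag] at hprod
    linarith
  · set m := n - 1 with hm
    have hmn : m < n := by omega
    have hm1 : m + 1 = n := by omega
    set b : Fin n → ℝ := fun k => A (γ k) (γ (k + 1)) with hbdef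
    have hbpos : ∀ k, 0 < b k := fun k => hA.1 _ _
    set b' : ℕ → ℝ := fun j => b ⟨j % n, Nat.mod_lt j hn0⟩ with hb'def
    have hb'pos : ∀ j, 0 < b' j := fun j => hbpos _
    set f : ℕ → ℝ := fun k => ∏ j ∈ Finset.Ico k m, b' j with hfdef
    have hfpos : ∀ k, 0 < f k := fun k => Finset.prod_pos (fun j _ => hb'pos j)
    have hfm : f m = 1 := by
      show (∏ j ∈ Finset.Ico m m, b' j) = 1
      simp
    have hstep : ∀ k, k < m → f k = b' k * f (k + 1) := by
      intro k hk
      exact Finset.prod_eq_prod_Ico_succ_bot hk b'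
    have hb'eq : ∀ k : Fin n, b' k.val = b k := by
      intro k
      show b ⟨k.val % n, _⟩ = b k
      congr 1
      exact Fin.ext (Nat.mod_eq_of_lt k.isLt)
    set P : ℝ := ∏ k : Fin n, b k with hPdef
    have hP0 : 0 < P := Finset.prod_pos fun k _ => hbpos k
    have hP1 : P < 1 := hprod
    have hPeq : P = f 0 * b' m := by
      have h1 : P = ∏ j ∈ Finset.range n, b' j := by
        rw [Finset.prod_range fun j => b' j]
        exact (Finset.prod_congr rfl fun k _ => (hb'eq k).symm)
      rw [h1, ← hm1, Finset.prod_range_succ]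
      congr 1
      show _ = ∏ j ∈ Finset.Ico 0 m, b' j
      rw [Finset.range_eq_Ico]
    set c : ℝ := (1 + P) / 2 with hcdef
    have hc0 : 0 < c := by positivity
    have hc1 : c < 1 := by rw [hcdef]; linarith
    have hPc : P ≤ c := by rw [hcdef]; linarith
    set e := Equiv.ofBijective γ hγ with hedef
    have hes : ∀ i : Fin n, e.symm (γ i) = i := fun i => e.symm_apply_apply i
    set s : ℕ → ℝ := fun k => if k = 0 then 1 else c with hsdef
    have hspos : ∀ k, 0 < s k := by
      intro k
      show 0 < if k = 0 then 1 else c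
      split
      · norm_num
      · exact hc0
    have hsc : ∀ k, c ≤ s k := by
      intro k
      show c ≤ if k = 0 then 1 else c
      split
      · linarith
      · exact le_rfl
    have hs1 : ∀ k, s k ≤ 1 := by
      intro k
      show (if k = 0 then 1 else c) ≤ 1
      split
      · exact le_rfl
      · linarith
    have hs0 : s 0 = 1 := rfl
    have hsm : s m = c := by
      show (if m = 0 then 1 else c) = c
      rw [if_neg (by omega)]
    have hval : ∀ k : Fin n, ((k + 1 : Fin n)).val = (k.val + 1) % n := by
      intro k
      rw [Fin.val_add, Fin.val_one', Nat.mod_eq_of_lt (show 1 < n by omega)]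
    refine ⟨fun i => f (e.symm i).val, fun i => f (e.symm i).val * s (e.symm i).val,
      fun i => hfpos _, fun i => mul_pos (hfpos _) (hspos _), ?_, ?_, ?_⟩
    · intro k
      simp only [hes]
      change b k * f _ ≤ f _
      rcases Nat.lt_or_ge k.val m with hk | hk
      · have h1 : ((k + 1 : Fin n)).val = k.val + 1 := by
          rw [hval]; exact Nat.mod_eq_of_lt (by omega)
        rw [h1]
        have h2 := hstep k.val hk
        rw [hb'eq] at h2
        linarith
      · have hkm : k.val = m := by omega
        have h1 : ((k + 1 : Fin n)).val = 0 := by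
          rw [hval, hkm, hm1, Nat.mod_self]
        have hbk : b k = b' m := by rw [← hkm, hb'eq]
        rw [h1, hbk, hkm, hfm]
        nlinarith
    · intro k
      simp only [hes]
      change b k * (f _ * s _) ≤ f _ * s _
      rcases Nat.lt_or_ge k.val m with hk | hk
      · have h1 : ((k + 1 : Fin n)).val = k.val + 1 := by
          rw [hval]; exact Nat.mod_eq_of_lt (by omega)
        rw [h1]
        have h2 := hstep k.val hk
        rw [hb'eq] at h2
        have h3 : s (k.val + 1) = c := by
          show (if k.val + 1 = 0 then 1 else c) = c
          rw [if_neg (by omega)]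
        rw [h3]
        have h4 := hsc k.val
        have h5 := hfpos k.val
        have heq : b k * (f (k.val + 1) * c) = f k.val * c := by rw [h2]; ring
        rw [heq]
        exact mul_le_mul_of_nonneg_left h4 (le_of_lt h5)
      · have hkm : k.val = m := by omega
        have h1 : ((k + 1 : Fin n)).val = 0 := by
          rw [hval, hkm, hm1, Nat.mod_self]
        have hbk : b k = b' m := by rw [← hkm, hb'eq]
        rw [h1, hbk, hkm, hfm, hs0, hsm]
        nlinarith
    · intro c' hprop
      have h1 := hprop (γ ⟨m, hmn⟩)
      have h2 := hprop (γ 0)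
      simp only [hes] at h1 h2
      rw [hfm, hsm] at h1
      have h0v : ((0 : Fin n)).val = 0 := rfl
      rw [h0v, hs0] at h2
      -- h1 : 1 = c' * (1 * c), h2 : f 0 = c' * (f 0 * 1)
      have hf0 := hfpos 0
      have hc' : c' = 1 := by
        have : f 0 = c' * f 0 := by linarith [h2]
        nlinarith
      rw [hc'] at h1
      nlinarith
end

section
/- Let A be an n-by-n reciprocal matrix and C = (γ_1→⋯→γ_n→γ_1) a Hamiltonian cycle with cycle product ≤ 1 such that a_{γ_nγ_1} > 1. Define w by w_{γ_1} = 1 and w_{γ_{k+1}} = w_{γ_k}/a_{γ_kγ_{k+1}} for k = 1,...,n−1. Then w ∈ ε_A(C), and w exhibits no order reversal with any entry of A along the cycle C: for each consecutive pair (γ_k, γ_{k+1}) (including (γ_n, γ_1)), a_{γ_kγ_{k+1}} > 1 implies w_{γ_k} > w_{γ_{k+1}}, a_{γ_kγ_{k+1}} < 1 implies w_{γ_k} < w_{γ_{k+1}}, and a_{γ_kγ_{k+1}} = 1 implies w_{γ_k} = w_{γ_{k+1}}. -/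
/-!
Along the cycle write `a_k = a_{γ_k γ_{k+1}}` and `v_k = w_{γ_k}`. The recursion makes every `v_k`
positive and gives `a_k v_{k+1} = v_k` on every edge but the closing one. Multiplying these
equalities over the whole cycle, the `v`'s cancel and leave `a_{n-1} v_0 = (∏ a) v_{n-1}`, so the
closing edge satisfies `a_{n-1} v_0 ≤ v_{n-1}` exactly because the cycle product is at most `1`.
On an edge with `a_k v_{k+1} ≤ v_k` and `a_k > 1`, the order of `v_k, v_{k+1}` already agrees
with `a_k`; on all other edges equality holds.
-/

theorem Fin.induction_add_one {n : ℕ} [NeZero n] {P : Fin n → Prop} (zero : P 0)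
    (succ : ∀ k : Fin n, k + 1 ≠ 0 → P k → P (k + 1)) (k : Fin n) : P k := by
  obtain ⟨m, rfl⟩ := Nat.exists_eq_succ_of_ne_zero (NeZero.ne n)
  induction k using Fin.induction with
  | zero => exact zero
  | succ i ih =>
    rw [← Fin.coeSucc_eq_succ]
    exact succ _ (by rw [Fin.coeSucc_eq_succ]; exact Fin.succ_ne_zero i) ih

theorem mul_apply_perm_eq_prod_mul {ι K : Type*} [Fintype ι] [DecidableEq ι]
    [CommGroupWithZero K] (σ : Equiv.Perm ι) (a v : ι → K) (k₀ : ι)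
    (hv : ∀ k ≠ k₀, v k ≠ 0) (h : ∀ k ≠ k₀, a k * v (σ k) = v k) :
    a k₀ * v (σ k₀) = (∏ k, a k) * v k₀ := by
  have hrest : ∏ k ∈ {k₀}ᶜ, v k ≠ 0 :=
    Finset.prod_ne_zero_iff.mpr fun k hk => hv k (by simpa using hk)
  have htotal : ∏ k, a k * v (σ k) = (∏ k, a k) * ∏ k, v k := by
    rw [Finset.prod_mul_distrib, Equiv.prod_comp σ v]
  rw [Fintype.prod_eq_mul_prod_compl k₀, Fintype.prod_eq_mul_prod_compl k₀ v,
    Finset.prod_congr rfl fun k hk => h k (by simpa using hk),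
    ← mul_assoc] at htotal
  exact mul_right_cancel₀ hrest htotal

/-- In the paper's notation `a = a_ij`, `x = w_i`, `y = w_j`. -/
def NoOrderReversal {α : Type*} [Preorder α] [One α] (a x y : α) : Prop :=
  (1 < a → y < x) ∧ (a < 1 → x < y) ∧ (a = 1 → x = y)

theorem noOrderReversal_of_mul_le {α : Type*} [Semiring α] [PartialOrder α]
    [IsStrictOrderedRing α] {a x y : α} (hy : 0 < y) (hle : a * y ≤ x)
    (heq : a ≤ 1 → a * y = x) : NoOrderReversal a x y := by
  refine ⟨fun ha => (lt_mul_of_one_lt_left hy ha).trans_le hle, fun ha => ?_, fun ha => ?_⟩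
  · rw [← heq ha.le]
    exact mul_lt_of_lt_one_left hy ha
  · rw [← heq ha.le, ha, one_mul]

/-- If the cycle product of `γ` in `A` is at most `1` and the last entry
`a_{γ_n γ_1}` along the cycle is `> 1`, then the vector `w` defined by
`w_{γ_1} = 1`, `w_{γ_{k+1}} = w_{γ_k} / a_{γ_k γ_{k+1}}` lies in `ε_A(C)` and
exhibits no order reversal with any entry of `A` along the cycle. -/
theorem stmt11 {n : ℕ} [NeZero n] (A : Matrix (Fin n) (Fin n) ℝ) (hA : Reciprocal A)
    (γ : Fin n → Fin n) (hγ : Function.Bijective γ)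
    (hprod : (∏ k : Fin n, A (γ k) (γ (k + 1))) ≤ 1)
    (hlast : ∀ k : Fin n, k + 1 = 0 → 1 < A (γ k) (γ 0))
    (w : Fin n → ℝ) (hw1 : w (γ 0) = 1)
    (hwrec : ∀ k : Fin n, k + 1 ≠ 0 →
      w (γ (k + 1)) = w (γ k) / A (γ k) (γ (k + 1))) :
    (∀ i, 0 < w i) ∧
    (∀ k : Fin n, A (γ k) (γ (k + 1)) * w (γ (k + 1)) ≤ w (γ k)) ∧
    (∀ k : Fin n,
      (1 < A (γ k) (γ (k + 1)) → w (γ (k + 1)) < w (γ k)) ∧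
      (A (γ k) (γ (k + 1)) < 1 → w (γ k) < w (γ (k + 1))) ∧
      (A (γ k) (γ (k + 1)) = 1 → w (γ k) = w (γ (k + 1)))) := by
  have hApos : ∀ i j, 0 < A i j := hA.1
  have hvpos : ∀ k, 0 < w (γ k) := Fin.induction_add_one (hw1 ▸ one_pos) fun k hk ih => by
    rw [hwrec k hk]
    exact div_pos ih (hApos _ _)
  have hstep (k : Fin n) (hk : k + 1 ≠ 0) : A (γ k) (γ (k + 1)) * w (γ (k + 1)) = w (γ k) := by
    rw [hwrec k hk, mul_div_cancel₀ _ (hApos _ _).ne']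
  have hclosing (k : Fin n) (hk : k + 1 = 0) :
      A (γ k) (γ (k + 1)) * w (γ (k + 1)) ≤ w (γ k) := by
    refine (mul_apply_perm_eq_prod_mul (Equiv.addRight 1) (fun k => A (γ k) (γ (k + 1)))
      (fun k => w (γ k)) k (fun j _ => (hvpos j).ne')
      (fun j hj => hstep j fun hj' => hj (add_right_cancel (hj'.trans hk.symm)))).trans_le ?_
    exact mul_le_of_le_one_left (hvpos k).le hprod
  have hedge (k : Fin n) : A (γ k) (γ (k + 1)) * w (γ (k + 1)) ≤ w (γ k) :=
    if hk : k + 1 = 0 then hclosing k hk else (hstep k hk).le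
  refine ⟨fun i => ?_, hedge, fun k => noOrderReversal_of_mul_le (hvpos _) (hedge k) fun hle => ?_⟩
  · obtain ⟨k, rfl⟩ := hγ.surjective i
    exact hvpos k
  · exact hstep k fun hk => (hle.trans_lt (hk ▸ hlast k hk)).false
end

section
/- Let A be an n-by-n reciprocal matrix and C a Hamiltonian cycle with cycle product ≤ 1 along which all entries of A are at most 1, with at least one entry strictly less than 1. Then there is no w ∈ ε_A(C) with no order reversal along C; i.e., every w ∈ ε_A(C) has at least one consecutive pair (γ_k, γ_{k+1}) (indices mod n) at which w exhibits an order reversal. -/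
/-- If all entries of `A` along the Hamiltonian cycle `γ` are at most `1` with at
least one strictly less than `1`, then every `w ∈ ε_A(C)` exhibits an order
reversal at some consecutive pair of the cycle. -/
theorem stmt12 {n : ℕ} [NeZero n] (A : Matrix (Fin n) (Fin n) ℝ) (hA : Reciprocal A)
    (γ : Fin n → Fin n) (hγ : Function.Bijective γ)
    (hprod : (∏ k : Fin n, A (γ k) (γ (k + 1))) ≤ 1)
    (hle : ∀ k : Fin n, A (γ k) (γ (k + 1)) ≤ 1)
    (hlt : ∃ k : Fin n, A (γ k) (γ (k + 1)) < 1)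
    (w : Fin n → ℝ) (hw : ∀ i, 0 < w i)
    (hmem : ∀ k : Fin n, A (γ k) (γ (k + 1)) * w (γ (k + 1)) ≤ w (γ k)) :
    ∃ k : Fin n, ¬ ((A (γ k) (γ (k + 1)) < 1 → w (γ k) < w (γ (k + 1))) ∧
      (1 < A (γ k) (γ (k + 1)) → w (γ (k + 1)) < w (γ k)) ∧
      (A (γ k) (γ (k + 1)) = 1 → w (γ k) = w (γ (k + 1)))) := by
  by_contra h
  push_neg at h
  -- From no order reversal: w(γ k) ≤ w(γ (k+1)) for all k
  have hmono : ∀ k : Fin n, w (γ k) ≤ w (γ (k + 1)) := by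
    intro k
    rcases lt_or_eq_of_le (hle k) with h1 | h1
    · exact ((h k).1 h1).le
    · exact ((h k).2.2 h1).le
  obtain ⟨k0, hk0⟩ := hlt
  have hstrict : w (γ k0) < w (γ (k0 + 1)) := (h k0).1 hk0
  have hpos : ∀ k : Fin n, 0 < w (γ k) := fun k => hw _
  have hlt2 : (∏ k : Fin n, w (γ k)) < ∏ k : Fin n, w (γ (k + 1)) := by
    exact Finset.prod_lt_prod (fun i _ => hpos i) (fun j _ => hmono j)
      ⟨k0, Finset.mem_univ k0, hstrict⟩
  have heq : (∏ k : Fin n, w (γ (k + 1))) = ∏ k : Fin n, w (γ k) := by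
    exact Fintype.prod_equiv (Equiv.addRight (1 : Fin n)) _ _ (fun k => rfl)
  rw [heq] at hlt2
  exact lt_irrefl _ hlt2
end

section
/- Let A be an n-by-n reciprocal matrix whose (n−1)-by-(n−1) lower-right principal submatrix is the all-ones matrix (a column perturbed consistent matrix in standard form), and let i ≠ j be indices in {2,...,n} with a_{1i}·a_{j1} < 1. Then every positive vector w satisfying a_{i1}·w_1 ≥ w_i, w_i ≥ w_k ≥ w_j for all k ∉ {1,i,j}, and w_j ≥ a_{j1}·w_1, is efficient for A. -/
/-- Edge `p → q` in the digraph `G(A, w)`. -/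
def Edge {n : ℕ} (A : Matrix (Fin n) (Fin n) ℝ) (w : Fin n → ℝ) (p q : Fin n) : Prop :=
  p ≠ q ∧ A p q * w q ≤ w p

/-- `w` is efficient for `A` iff `w` is positive and `G(A,w)` is strongly connected. -/
def Efficient {n : ℕ} (A : Matrix (Fin n) (Fin n) ℝ) (w : Fin n → ℝ) : Prop :=
  (∀ i, 0 < w i) ∧ ∀ i j : Fin n, Relation.ReflTransGen (Edge A w) i j

/-- For a column perturbed consistent matrix in standard form, every vector in
the chain set `ε_{ij}(A) = {w > 0 : a_{i1} w_1 ≥ w_i ≥ w_k ≥ w_j ≥ a_{j1} w_1}`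
is efficient for `A`. -/
theorem stmt13 {n : ℕ} [NeZero n] (A : Matrix (Fin n) (Fin n) ℝ) (hA : Reciprocal A)
    (hones : ∀ p q : Fin n, p ≠ 0 → q ≠ 0 → A p q = 1)
    (i j : Fin n) (hi : i ≠ 0) (hj : j ≠ 0) (hij : i ≠ j)
    (hprod : A 0 i * A j 0 < 1)
    (w : Fin n → ℝ) (hw : ∀ k, 0 < w k)
    (h1 : w i ≤ A i 0 * w 0)
    (hchain : ∀ k : Fin n, k ≠ 0 → k ≠ i → k ≠ j → w k ≤ w i ∧ w j ≤ w k)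
    (hij' : w j ≤ w i)
    (h2 : A j 0 * w 0 ≤ w j) :
    Efficient A w := by
  obtain ⟨hpos, hrec⟩ := hA
  refine ⟨hw, ?_⟩
  -- key edges
  have e0i : Edge A w 0 i := by
    refine ⟨Ne.symm hi, ?_⟩
    rw [hrec i 0]
    rw [div_mul_eq_mul_div, one_mul, div_le_iff₀ (hpos i 0)]
    nlinarith [hpos i 0, hw 0]
  have eik : ∀ k : Fin n, k ≠ 0 → k ≠ i → Edge A w i k := by
    intro k hk0 hki
    refine ⟨Ne.symm hki, ?_⟩
    rw [hones i k hi hk0, one_mul]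
    by_cases hkj : k = j
    · subst hkj; exact hij'
    · exact (hchain k hk0 hki hkj).1
  have ekj : ∀ k : Fin n, k ≠ 0 → k ≠ j → Edge A w k j := by
    intro k hk0 hkj
    refine ⟨hkj, ?_⟩
    rw [hones k j hk0 hj, one_mul]
    by_cases hki : k = i
    · subst hki; exact hij'
    · exact (hchain k hk0 hki hkj).2
  have ej0 : Edge A w j 0 := ⟨hj, h2⟩
  have reach0 : ∀ p : Fin n, Relation.ReflTransGen (Edge A w) p 0 := by
    intro p
    by_cases hp0 : p = 0
    · subst hp0; exact Relation.ReflTransGen.refl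
    · by_cases hpj : p = j
      · subst hpj; exact Relation.ReflTransGen.single ej0
      · exact Relation.ReflTransGen.head (ekj p hp0 hpj)
          (Relation.ReflTransGen.single ej0)
  have from0 : ∀ q : Fin n, Relation.ReflTransGen (Edge A w) 0 q := by
    intro q
    by_cases hq0 : q = 0
    · subst hq0; exact Relation.ReflTransGen.refl
    · by_cases hqi : q = i
      · subst hqi; exact Relation.ReflTransGen.single e0i
      · exact Relation.ReflTransGen.head e0i
          (Relation.ReflTransGen.single (eik q hq0 hqi))
  intro p q
  exact (reach0 p).trans (from0 q)
end

section
/- Let A be an n-by-n reciprocal matrix with all entries equal to 1 except in the first row and column. If w is efficient for A, then there exist distinct indices i, j ∈ {2,...,n} with a_{1i}·a_{j1} < 1 such that a_{i1}·w_1 ≥ w_i, w_i ≥ w_k ≥ w_j for all k ∉ {1,i,j}, and w_j ≥ a_{j1}·w_1. Together with the converse, the set of efficient vectors for A equals the union over such pairs (i,j) of these convex sets ε_{ij}(A). -/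
/-- `A` is consistent if `A = v v^{(-T)}` for some positive vector `v`. -/
def Consistent {n : ℕ} (A : Matrix (Fin n) (Fin n) ℝ) : Prop :=
  ∃ v : Fin n → ℝ, (∀ i, 0 < v i) ∧ ∀ i j, A i j = v i / v j

/-!
Among the vertices `2, …, n` the only edges of `G(A, w)` go from larger to smaller weights,
so a path from vertex `1` to a vertex of maximal weight must leave `1` through a vertex `i`
of maximal weight, which forces `w_i ≤ a_{i1} w_1`; dually a path back to `1` enters it from
a vertex `j` of minimal weight with `a_{j1} w_1 ≤ w_j`. If `w_j < w_i` this pair already works.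
Otherwise `w` is constant on `2, …, n`, and the pair maximising resp. minimising `a_{k1}` works;
these two entries differ because `A` is inconsistent. Conversely, on `ε_{ij}(A)` every vertex
reaches `1` through `j`, and `1` reaches every vertex through `i`.
-/

open Relation

namespace Relation.ReflTransGen

variable {α β : Type*} [Preorder β] {r : α → α → Prop} {a b : α} (w : α → β)

theorem exists_first_step_ge (hmono : ∀ p q, p ≠ a → q ≠ a → r p q → w q ≤ w p)
    (h : ReflTransGen r a b) (hb : b ≠ a) : ∃ c, c ≠ a ∧ r a c ∧ w b ≤ w c := by
  induction h with
  | refl => exact absurd rfl hb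
  | @tail p q _ hpq ih =>
    by_cases hp : p = a
    · subst hp
      exact ⟨q, hb, hpq, le_rfl⟩
    · obtain ⟨c, hc, hac, hpc⟩ := ih hp
      exact ⟨c, hc, hac, (hmono p q hp hb hpq).trans hpc⟩

theorem exists_last_step_le (hmono : ∀ p q, p ≠ a → q ≠ a → r p q → w q ≤ w p)
    (h : ReflTransGen r b a) (hb : b ≠ a) : ∃ c, c ≠ a ∧ r c a ∧ w c ≤ w b :=
  exists_first_step_ge (r := flip r) (OrderDual.toDual ∘ w)
    (fun p q hp hq hpq => hmono q p hq hp hpq) h.swap hb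

end Relation.ReflTransGen

/-- The set `ε_{ij}(A)` of the paper, with vertex `1` of the paper indexed by `0`. -/
def epsilonSet {n : ℕ} [NeZero n] (A : Matrix (Fin n) (Fin n) ℝ) (i j : Fin n) :
    Set (Fin n → ℝ) :=
  {w | w i ≤ A i 0 * w 0 ∧
    (∀ k : Fin n, k ≠ 0 → k ≠ i → k ≠ j → w k ≤ w i ∧ w j ≤ w k) ∧
    w j ≤ w i ∧ A j 0 * w 0 ≤ w j}

section StandardForm

variable {n : ℕ} {A : Matrix (Fin n) (Fin n) ℝ} {w : Fin n → ℝ}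

theorem Reciprocal.apply_self (hA : Reciprocal A) (i : Fin n) : A i i = 1 := by
  have h := hA.2 i i
  have hpos := hA.1 i i
  field_simp at h
  nlinarith

variable [NeZero n]

theorem Reciprocal.mul_apply_lt_one_iff (hA : Reciprocal A) (i j : Fin n) :
    A 0 i * A j 0 < 1 ↔ A j 0 < A i 0 := by
  rw [hA.2 i 0, one_div_mul_eq_div, div_lt_one (hA.1 i 0)]

theorem Reciprocal.edge_zero_iff (hA : Reciprocal A) {q : Fin n} (hq : q ≠ 0) :
    Edge A w 0 q ↔ w q ≤ A q 0 * w 0 := by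
  rw [Edge, hA.2 q 0, one_div_mul_eq_div, div_le_iff₀ (hA.1 q 0), mul_comm (w 0)]
  exact and_iff_right hq.symm

section OffFirst

variable (hones : ∀ p q : Fin n, p ≠ 0 → q ≠ 0 → A p q = 1)
include hones

theorem edge_iff_of_ne_zero {p q : Fin n} (hp : p ≠ 0) (hq : q ≠ 0) :
    Edge A w p q ↔ p ≠ q ∧ w q ≤ w p := by
  rw [Edge, hones p q hp hq, one_mul]

theorem consistent_of_apply_zero_eq (hA : Reciprocal A)
    (h : ∀ k l : Fin n, k ≠ 0 → l ≠ 0 → A k 0 = A l 0) : Consistent A := by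
  refine ⟨fun k => A k 0, fun k => hA.1 k 0, fun i j => ?_⟩
  show A i j = A i 0 / A j 0
  by_cases hj : j = 0
  · subst hj
    rw [hA.apply_self, div_one]
  by_cases hi : i = 0
  · subst hi
    rw [hA.2 j 0, hA.apply_self]
  rw [hones i j hi hj, h i j hi hj, div_self (hA.1 j 0).ne']

theorem exists_apply_zero_extremes_of_not_consistent (hA : Reciprocal A)
    (hinc : ¬ Consistent A) :
    ∃ i j : Fin n, i ≠ 0 ∧ j ≠ 0 ∧ A j 0 < A i 0 ∧
      ∀ t : Fin n, t ≠ 0 → A j 0 ≤ A t 0 ∧ A t 0 ≤ A i 0 := by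
  obtain ⟨k, l, hk, hl, hkl⟩ : ∃ k l : Fin n, k ≠ 0 ∧ l ≠ 0 ∧ A k 0 ≠ A l 0 := by
    by_contra! h
    exact hinc (consistent_of_apply_zero_eq hones hA h)
  have hne : (Finset.univ.erase (0 : Fin n)).Nonempty := ⟨k, by simpa using hk⟩
  obtain ⟨i, hi, himax⟩ := (Finset.univ.erase (0 : Fin n)).exists_max_image (A · 0) hne
  obtain ⟨j, hj, hjmin⟩ := (Finset.univ.erase (0 : Fin n)).exists_min_image (A · 0) hne
  simp only [Finset.mem_erase, Finset.mem_univ, and_true] at hi hj himax hjmin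
  refine ⟨i, j, hi, hj, ?_, fun t ht => ⟨hjmin t ht, himax t ht⟩⟩
  by_contra! hji
  exact hkl (by linarith [himax k hk, hjmin k hk, himax l hl, hjmin l hl])

theorem edge_weight_anti {p q : Fin n} (hp : p ≠ 0) (hq : q ≠ 0) (h : Edge A w p q) :
    w q ≤ w p :=
  ((edge_iff_of_ne_zero hones hp hq).1 h).2

theorem Efficient.exists_max_le (hA : Reciprocal A) (hw : Efficient A w) {k : Fin n}
    (hk : k ≠ 0) : ∃ i, i ≠ 0 ∧ w i ≤ A i 0 * w 0 ∧ ∀ t : Fin n, t ≠ 0 → w t ≤ w i := by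
  have hne : (Finset.univ.erase (0 : Fin n)).Nonempty := ⟨k, by simpa using hk⟩
  obtain ⟨m, hm, hmax⟩ := (Finset.univ.erase (0 : Fin n)).exists_max_image w hne
  simp only [Finset.mem_erase, Finset.mem_univ, and_true] at hm hmax
  obtain ⟨i, hi, hedge, hmi⟩ := (hw.2 0 m).exists_first_step_ge w
    (fun _ _ hp hq => edge_weight_anti hones hp hq) hm
  exact ⟨i, hi, (hA.edge_zero_iff hi).1 hedge, fun t ht => (hmax t ht).trans hmi⟩

theorem Efficient.exists_min_ge (hw : Efficient A w) {k : Fin n} (hk : k ≠ 0) :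
    ∃ j, j ≠ 0 ∧ A j 0 * w 0 ≤ w j ∧ ∀ t : Fin n, t ≠ 0 → w j ≤ w t := by
  have hne : (Finset.univ.erase (0 : Fin n)).Nonempty := ⟨k, by simpa using hk⟩
  obtain ⟨m, hm, hmin⟩ := (Finset.univ.erase (0 : Fin n)).exists_min_image w hne
  simp only [Finset.mem_erase, Finset.mem_univ, and_true] at hm hmin
  obtain ⟨j, hj, hedge, hjm⟩ := (hw.2 m 0).exists_last_step_le w
    (fun _ _ hp hq => edge_weight_anti hones hp hq) hm
  exact ⟨j, hj, hedge.2, fun t ht => hjm.trans (hmin t ht)⟩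

theorem Efficient.exists_mem_epsilonSet (hA : Reciprocal A) (hinc : ¬ Consistent A)
    (hw : Efficient A w) :
    ∃ i j : Fin n, i ≠ 0 ∧ j ≠ 0 ∧ A j 0 < A i 0 ∧ w ∈ epsilonSet A i j := by
  obtain ⟨i₀, j₀, hi₀, hj₀, hlt₀, hcol⟩ :=
    exists_apply_zero_extremes_of_not_consistent hones hA hinc
  obtain ⟨i, hi, hwi, himax⟩ := hw.exists_max_le hones hA hi₀
  obtain ⟨j, hj, hwj, hjmin⟩ := hw.exists_min_ge hones hi₀
  rcases lt_or_ge (w j) (w i) with hlt | hge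
  · have hAlt : A j 0 * w 0 < A i 0 * w 0 := by linarith
    refine ⟨i, j, hi, hj, lt_of_mul_lt_mul_right hAlt (hw.1 0).le, hwi,
      fun t ht _ _ => ⟨himax t ht, hjmin t ht⟩, hlt.le, hwj⟩
  · -- `w` is constant on the nonzero indices, so the extremes of the first column work.
    have hw0 := hw.1 0
    have hAi := mul_le_mul_of_nonneg_right (hcol i hi).2 hw0.le
    have hAj := mul_le_mul_of_nonneg_right (hcol j hj).1 hw0.le
    have hi₀_top := himax i₀ hi₀
    have hj₀_top := himax j₀ hj₀
    have hi₀_bot := hjmin i₀ hi₀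
    have hj₀_bot := hjmin j₀ hj₀
    refine ⟨i₀, j₀, hi₀, hj₀, hlt₀, by linarith, fun t ht _ _ => ?_, by linarith, by linarith⟩
    constructor <;> linarith [himax t ht, hjmin t ht]

theorem efficient_of_mem_epsilonSet (hA : Reciprocal A) (hpos : ∀ k, 0 < w k) {i j : Fin n}
    (hi : i ≠ 0) (hj : j ≠ 0) (hw : w ∈ epsilonSet A i j) : Efficient A w := by
  obtain ⟨hwi, hmid, hji, hwj⟩ := hw
  have hlow : ∀ t : Fin n, t ≠ 0 → w j ≤ w t := fun t ht => by
    by_cases hti : t = i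
    · exact hti ▸ hji
    by_cases htj : t = j
    · exact htj ▸ le_rfl
    exact (hmid t ht hti htj).2
  have hhigh : ∀ t : Fin n, t ≠ 0 → w t ≤ w i := fun t ht => by
    by_cases htj : t = j
    · exact htj ▸ hji
    by_cases hti : t = i
    · exact hti ▸ le_rfl
    exact (hmid t ht hti htj).1
  have hto : ∀ p, ReflTransGen (Edge A w) p 0 := fun p => by
    have hj0 : Edge A w j 0 := ⟨hj, hwj⟩
    by_cases hp : p = 0
    · exact hp ▸ .refl
    by_cases hpj : p = j
    · exact hpj ▸ .single hj0
    exact .head ((edge_iff_of_ne_zero hones hp hj).2 ⟨hpj, hlow p hp⟩) (.single hj0)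
  have hfrom : ∀ q, ReflTransGen (Edge A w) 0 q := fun q => by
    have h0i : Edge A w 0 i := (hA.edge_zero_iff hi).2 hwi
    by_cases hq : q = 0
    · exact hq ▸ .refl
    by_cases hqi : q = i
    · exact hqi ▸ .single h0i
    exact .tail (.single h0i) ((edge_iff_of_ne_zero hones hi hq).2 ⟨Ne.symm hqi, hhigh q hq⟩)
  exact ⟨hpos, fun p q => (hto p).trans (hfrom q)⟩

end OffFirst

end StandardForm

/-- For an inconsistent column perturbed consistent matrix in standard form, the
set of efficient vectors is the union over pairs `(i,j)` with `a_{1i} a_{j1} < 1`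
of the convex chain sets `ε_{ij}(A)`. -/
theorem stmt14 {n : ℕ} [NeZero n] (A : Matrix (Fin n) (Fin n) ℝ) (hA : Reciprocal A)
    (hones : ∀ p q : Fin n, p ≠ 0 → q ≠ 0 → A p q = 1)
    (hinc : ¬ Consistent A)
    (w : Fin n → ℝ) (hw : ∀ k, 0 < w k) :
    Efficient A w ↔
      ∃ i j : Fin n, i ≠ 0 ∧ j ≠ 0 ∧ i ≠ j ∧ A 0 i * A j 0 < 1 ∧
        w i ≤ A i 0 * w 0 ∧
        (∀ k : Fin n, k ≠ 0 → k ≠ i → k ≠ j → w k ≤ w i ∧ w j ≤ w k) ∧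
        w j ≤ w i ∧
        A j 0 * w 0 ≤ w j := by
  constructor
  · intro heff
    obtain ⟨i, j, hi, hj, hlt, hmem⟩ := heff.exists_mem_epsilonSet hones hA hinc
    exact ⟨i, j, hi, hj, fun h => (h ▸ hlt).false, (hA.mul_apply_lt_one_iff i j).2 hlt, hmem⟩
  · rintro ⟨i, j, hi, hj, -, -, hmem⟩
    exact efficient_of_mem_epsilonSet hones hA hw hi hj hmem
end

section
/- Let A be the n-by-n reciprocal simple perturbed consistent matrix with a_{1k} = 1 for k = 2,...,n−1, a_{1n} = x > 1, all entries in rows and columns 2,...,n−1 among indices 2,...,n equal to 1, and a_{n1} = 1/x. Then the set of efficient vectors for A equals {w ∈ R^n_{>0} : w_1 ≥ w_k ≥ w_n ≥ (1/x)·w_1 for all k ≠ 1, n}. In particular, this set is convex. -/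
/-- For the simple perturbed consistent matrix (all entries `1` except
`a_{1n} = x > 1` and `a_{n1} = 1/x`), the set of efficient vectors is
`{w > 0 : w_1 ≥ w_k ≥ w_n ≥ (1/x) w_1 for all k ≠ 1, n}`. -/
theorem stmt15 (n : ℕ) [NeZero n] (hn : 2 < n) (x : ℝ) (hx : 1 < x)
    (lst : Fin n) (hlst : lst = ⟨n - 1, by omega⟩)
    (A : Matrix (Fin n) (Fin n) ℝ) (hA : Reciprocal A)
    (htop : ∀ k : Fin n, k ≠ 0 → k ≠ lst → A 0 k = 1)
    (hxent : A 0 lst = x)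
    (hblock : ∀ p q : Fin n, p ≠ 0 → q ≠ 0 → A p q = 1)
    (w : Fin n → ℝ) (hw : ∀ k, 0 < w k) :
    Efficient A w ↔
      ((∀ k : Fin n, k ≠ 0 → k ≠ lst → w k ≤ w 0 ∧ w lst ≤ w k) ∧
        x⁻¹ * w 0 ≤ w lst) := by
  obtain ⟨hApos, hArec⟩ := hA
  have hx0 : (0:ℝ) < x := by linarith
  have hlst0 : lst ≠ 0 := by
    subst hlst; simp only [Ne, Fin.ext_iff, Fin.val_zero]; omega
  have hAmid0 : ∀ k : Fin n, k ≠ 0 → k ≠ lst → A k 0 = 1 := by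
    intro k hk hkl; rw [hArec, htop k hk hkl]; norm_num
  have hAlst0 : A lst 0 = x⁻¹ := by rw [hArec, hxent, one_div]
  have hxinv0 : (0:ℝ) < x⁻¹ := inv_pos.mpr hx0
  have hxinv1 : x⁻¹ * w 0 ≤ w 0 := by
    rw [inv_mul_le_iff₀ hx0]; nlinarith [hw 0]
  constructor
  · rintro ⟨hpos, hconn⟩
    have factA : ∀ k : Fin n, Relation.ReflTransGen (Edge A w) 0 k →
        k = 0 ∨ w k ≤ w 0 := by
      intro k h
      induction h with
      | refl => exact Or.inl rfl
      | @tail b c hb e ih =>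
        by_cases hc0 : c = 0
        · exact Or.inl hc0
        right
        by_cases hb0 : b = 0
        · subst hb0
          by_cases hcl : c = lst
          · have := e.2; rw [hcl, hxent] at this
            rw [hcl]; nlinarith [hw lst]
          · have := e.2; rw [htop c hc0 hcl, one_mul] at this; exact this
        · have hwb : w b ≤ w 0 := ih.resolve_left hb0
          have := e.2; rw [hblock b c hb0 hc0, one_mul] at this; linarith
    have factB : ∀ k : Fin n, k ≠ 0 → k ≠ lst → w lst ≤ w k := by
      intro k hk0 hkl
      have key : ∀ b : Fin n, Relation.ReflTransGen (Edge A w) k b →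
          ((b ≠ 0 ∧ w b ≤ w k) ∨ (w 0 ≤ w k) ∨ w lst ≤ w k) := by
        intro b h
        induction h with
        | refl => exact Or.inl ⟨hk0, le_refl _⟩
        | @tail b c hb e ih =>
          rcases ih with ⟨hb0, hwb⟩ | h0 | hok
          · by_cases hc0 : c = 0
            · by_cases hbl : b = lst
              · subst hbl; exact Or.inr (Or.inr hwb)
              · have := e.2; rw [hc0, hAmid0 b hb0 hbl, one_mul] at this
                exact Or.inr (Or.inl (by linarith))
            · have := e.2; rw [hblock b c hb0 hc0, one_mul] at this
              exact Or.inl ⟨hc0, by linarith⟩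
          · by_cases hb0 : b = 0
            · subst hb0
              have hc0 : c ≠ 0 := fun h => e.1 h.symm
              by_cases hcl : c = lst
              · have := e.2; rw [hcl, hxent] at this
                exact Or.inr (Or.inr (by nlinarith [hw lst]))
              · have := e.2; rw [htop c hc0 hcl, one_mul] at this
                exact Or.inl ⟨hc0, by linarith⟩
            · by_cases hc0 : c = 0
              · by_cases hbl : b = lst
                · subst hbl
                  have := e.2; rw [hc0, hAlst0] at this
                  exact Or.inr (Or.inl h0)
                · exact Or.inr (Or.inl h0)
              · by_cases hbl : b = lst
                · subst hbl
                  have := e.2; rw [hblock _ c hb0 hc0, one_mul] at this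
                  -- w c ≤ w lst, but we only track the invariant; keep Or.inr Or.inl
                  exact Or.inr (Or.inl h0)
                · exact Or.inr (Or.inl h0)
          · exact Or.inr (Or.inr hok)
      rcases key lst (hconn k lst) with ⟨_, h⟩ | h0 | hok
      · exact h
      · -- w 0 ≤ w k together with w lst ≤ w 0 from factA along path 0 → lst
        have := (factA lst (hconn 0 lst)).resolve_left hlst0
        linarith
      · exact hok
    refine ⟨fun k hk0 hkl => ⟨(factA k (hconn 0 k)).resolve_left hk0,
        factB k hk0 hkl⟩, ?_⟩
    -- Fact C : x⁻¹ * w 0 ≤ w lst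
    have key : ∀ b : Fin n, Relation.ReflTransGen (Edge A w) lst b →
        ((b ≠ 0 ∧ w b ≤ w lst) ∨ x⁻¹ * w 0 ≤ w lst) := by
      intro b h
      induction h with
      | refl => exact Or.inl ⟨hlst0, le_refl _⟩
      | @tail b c hb e ih =>
        rcases ih with ⟨hb0, hwb⟩ | hok
        · by_cases hc0 : c = 0
          · by_cases hbl : b = lst
            · subst hbl
              have := e.2; rw [hc0, hAlst0] at this
              exact Or.inr this
            · have := e.2; rw [hc0, hAmid0 b hb0 hbl, one_mul] at this
              exact Or.inr (by linarith)
          · have := e.2; rw [hblock b c hb0 hc0, one_mul] at this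
            exact Or.inl ⟨hc0, by linarith⟩
        · exact Or.inr hok
    rcases key 0 (hconn lst 0) with ⟨h0, _⟩ | hok
    · exact absurd rfl h0
    · exact hok
  · rintro ⟨H1, H2⟩
    refine ⟨hw, ?_⟩
    set m : Fin n := ⟨1, by omega⟩ with hm
    have hm0 : m ≠ 0 := by simp only [hm, Ne, Fin.ext_iff, Fin.val_zero]; omega
    have hml : m ≠ lst := by
      subst hlst; simp only [hm, Ne, Fin.ext_iff]; omega
    have e_0m : ∀ k : Fin n, k ≠ 0 → k ≠ lst → Edge A w 0 k := by
      intro k h1 h2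
      exact ⟨fun h => h1 h.symm, by rw [htop k h1 h2, one_mul]; exact (H1 k h1 h2).1⟩
    have e_klst : ∀ k : Fin n, k ≠ 0 → k ≠ lst → Edge A w k lst := by
      intro k h1 h2
      exact ⟨h2, by rw [hblock k lst h1 hlst0, one_mul]; exact (H1 k h1 h2).2⟩
    have e_lst0 : Edge A w lst 0 := ⟨hlst0, by rw [hAlst0]; exact H2⟩
    have reach0 : ∀ j : Fin n, Relation.ReflTransGen (Edge A w) 0 j := by
      intro j
      by_cases hj0 : j = 0
      · subst hj0; exact Relation.ReflTransGen.refl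
      by_cases hjl : j = lst
      · subst hjl
        exact (Relation.ReflTransGen.single (e_0m m hm0 hml)).tail (e_klst m hm0 hml)
      · exact Relation.ReflTransGen.single (e_0m j hj0 hjl)
    have to0 : ∀ i : Fin n, Relation.ReflTransGen (Edge A w) i 0 := by
      intro i
      by_cases hi0 : i = 0
      · subst hi0; exact Relation.ReflTransGen.refl
      by_cases hil : i = lst
      · subst hil; exact Relation.ReflTransGen.single e_lst0
      · exact (Relation.ReflTransGen.single (e_klst i hi0 hil)).tail e_lst0
    exact fun i j => (to0 i).trans (reach0 j)
end

section
/- Let A be the 4-by-4 reciprocal matrix with rows (1, 1/3, 1/2, 1), (3, 1, 1, 1), (2, 1, 1, 1), (1, 1, 1, 1). Then u = (1,3,3,3) and v = (1,1,2,1) are both efficient for A, but u + v = (2,4,5,4) is not efficient for A. Hence the set of efficient vectors of a reciprocal matrix need not be convex. -/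
namespace Relation

variable {α : Type*} {R : α → α → Prop}

theorem reflTransGen_of_surjective_cycle {m : ℕ} (σ : Fin (m + 1) → α)
    (hσ : Function.Surjective σ) (hR : ∀ i, R (σ i) (σ (i + 1))) (x y : α) :
    ReflTransGen R x y := by
  have hstep (i : Fin m) : R (σ i.castSucc) (σ i.succ) := by
    simpa [Fin.coeSucc_eq_succ] using hR i.castSucc
  have from_zero (j : Fin (m + 1)) : ReflTransGen R (σ 0) (σ j) :=
    Fin.induction .refl (fun i h ↦ h.tail (hstep i)) j
  have to_zero (i : Fin (m + 1)) : ReflTransGen R (σ i) (σ 0) :=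
    Fin.reverseInduction (.single (by simpa using hR (Fin.last m)))
      (fun i h ↦ .head (hstep i) h) i
  obtain ⟨i, rfl⟩ := hσ x
  obtain ⟨j, rfl⟩ := hσ y
  exact (to_zero i).trans (from_zero j)

theorem ReflTransGen.eq_of_forall_not_rel {x y : α} (h : ReflTransGen R x y)
    (hy : ∀ z, ¬ R z y) : x = y := by
  rcases h.cases_tail with h | ⟨z, -, hz⟩
  · exact h.symm
  · exact absurd hz (hy z)

end Relation

section Efficient

variable {n : ℕ} {A : Matrix (Fin n) (Fin n) ℝ} {w : Fin n → ℝ}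

theorem efficient_of_surjective_cycle (hw : ∀ i, 0 < w i) {m : ℕ} (σ : Fin (m + 1) → Fin n)
    (hσ : Function.Surjective σ) (hedge : ∀ i, Edge A w (σ i) (σ (i + 1))) : Efficient A w :=
  ⟨hw, Relation.reflTransGen_of_surjective_cycle σ hσ hedge⟩

theorem not_efficient_of_forall_not_edge {p q : Fin n} (hpq : p ≠ q)
    (hq : ∀ r, ¬ Edge A w r q) : ¬ Efficient A w :=
  fun h ↦ hpq ((h.2 p q).eq_of_forall_not_rel hq)

end Efficient

noncomputable def counterexampleMatrix : Matrix (Fin 4) (Fin 4) ℝ :=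
  !![1, 1/3, 1/2, 1; 3, 1, 1, 1; 2, 1, 1, 1; 1, 1, 1, 1]

theorem efficient_counterexampleMatrix_u : Efficient counterexampleMatrix ![1, 3, 3, 3] := by
  refine efficient_of_surjective_cycle (by simp [Fin.forall_fin_succ]) ![0, 1, 2, 3]
    (by decide) fun i ↦ ?_
  fin_cases i <;> simp [Edge, counterexampleMatrix]

theorem efficient_counterexampleMatrix_v : Efficient counterexampleMatrix ![1, 1, 2, 1] := by
  refine efficient_of_surjective_cycle (by simp [Fin.forall_fin_succ]) ![0, 2, 1, 3]
    (by decide) fun i ↦ ?_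
  fin_cases i <;> simp [Edge, counterexampleMatrix]

theorem not_efficient_counterexampleMatrix_add :
    ¬ Efficient counterexampleMatrix ![2, 4, 5, 4] := by
  refine not_efficient_of_forall_not_edge (p := 0) (q := 2) (by decide) fun r ↦ ?_
  fin_cases r <;> simp [Edge, counterexampleMatrix] <;> norm_num

/-- For the given 4-by-4 double perturbed consistent matrix, `u = (1,3,3,3)` and
`v = (1,1,2,1)` are efficient but `u + v = (2,4,5,4)` is not: the set of
efficient vectors need not be convex. -/
theorem stmt18 :
    Efficient (!![1, 1/3, 1/2, 1; 3, 1, 1, 1; 2, 1, 1, 1; 1, 1, 1, 1]) ![1, 3, 3, 3] ∧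
    Efficient (!![1, 1/3, 1/2, 1; 3, 1, 1, 1; 2, 1, 1, 1; 1, 1, 1, 1]) ![1, 1, 2, 1] ∧
    ¬ Efficient (!![1, 1/3, 1/2, 1; 3, 1, 1, 1; 2, 1, 1, 1; 1, 1, 1, 1]) ![2, 4, 5, 4] :=
  ⟨efficient_counterexampleMatrix_u, efficient_counterexampleMatrix_v,
    not_efficient_counterexampleMatrix_add⟩
end

section
/- Let A be an n-by-n reciprocal matrix that is inconsistent, and suppose all entries of A along the Hamiltonian cycle 1→2→⋯→n→1 equal 1 (i.e., a_{k,k+1} = 1 for k = 1,...,n−1 and a_{n1} = 1). Then there exists a Hamiltonian cycle C′ such that every entry of A along C′ is at most 1 and at least one entry along C′ is strictly less than 1. -/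
section
open Fin.CommRing

theorem Fin.val_natCast_sub_natCast {n : ℕ} [NeZero n] {a b : ℕ} (ha : a < n) (hb : b < n) :
    ((b : Fin n) - a).val = if a ≤ b then b - a else n + b - a := by
  rw [Fin.sub_def]
  simp only [Fin.val_natCast, Nat.mod_eq_of_lt ha, Nat.mod_eq_of_lt hb]
  split_ifs
  · rw [show n - a + b = (b - a) + n by omega, Nat.add_mod_right, Nat.mod_eq_of_lt (by omega)]
  · rw [Nat.mod_eq_of_lt (by omega)]; omega

theorem Fin.val_add_one_eq_ite {n : ℕ} [NeZero n] (k : Fin n) :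
    (k + 1).val = if k.val + 1 < n then k.val + 1 else 0 := by
  obtain ⟨m, rfl⟩ := Nat.exists_eq_succ_of_ne_zero (NeZero.ne n)
  rw [Fin.val_add_one]
  simp only [Fin.ext_iff, Fin.val_last]
  split_ifs <;> omega

variable {n : ℕ} {A : Matrix (Fin n) (Fin n) ℝ}

namespace Reciprocal

theorem apply_self_s19 (hA : Reciprocal A) (i : Fin n) : A i i = 1 := by
  have h := hA.2 i i
  rw [eq_div_iff (hA.1 i i).ne'] at h
  nlinarith [hA.1 i i]

theorem apply_lt_one_iff (hA : Reciprocal A) (i j : Fin n) : A j i < 1 ↔ 1 < A i j := by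
  rw [hA.2 i j, div_lt_one (hA.1 i j)]

theorem apply_le_one_iff (hA : Reciprocal A) (i j : Fin n) : A j i ≤ 1 ↔ 1 ≤ A i j := by
  rw [hA.2 i j, div_le_one (hA.1 i j)]

theorem apply_eq_one_iff (hA : Reciprocal A) (i j : Fin n) : A j i = 1 ↔ A i j = 1 := by
  rw [hA.2 i j, div_eq_one_iff_eq (hA.1 i j).ne', eq_comm]

theorem submatrix (hA : Reciprocal A) (e : Fin n → Fin n) : Reciprocal (A.submatrix e e) :=
  ⟨fun i j => hA.1 (e i) (e j), fun i j => hA.2 (e i) (e j)⟩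

end Reciprocal

def OneOnChordsBelow (A : Matrix (Fin n) (Fin n) ℝ) (s : ℕ) : Prop :=
  ∀ i j : Fin n, (j - i).val < s → A i j = 1

theorem OneOnChordsBelow.submatrix {s : ℕ} (h : OneOnChordsBelow A s) (hA : Reciprocal A) {e : Fin n → Fin n}
    (he : ∀ x y, e y - e x = y - x ∨ e x - e y = y - x) :
    OneOnChordsBelow (A.submatrix e e) s := by
  intro x y hxy
  rcases he x y with hxy' | hxy'
  · exact h _ _ (by rwa [hxy'])
  · exact (hA.apply_eq_one_iff _ _).mp (h _ _ (by rwa [hxy']))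

theorem exists_apply_ne_one_oneOnChordsBelow (hinc : ¬ Consistent A) :
    ∃ i j, A i j ≠ 1 ∧ OneOnChordsBelow A (j - i).val := by
  obtain ⟨p, hp⟩ : ∃ p : Fin n × Fin n, A p.1 p.2 ≠ 1 := by
    by_contra! h
    exact hinc ⟨1, fun _ => one_pos, fun i j => by simp [h (i, j)]⟩
  obtain ⟨⟨i, j⟩, hij, hmin⟩ := Finset.exists_min_image
    (Finset.univ.filter fun p : Fin n × Fin n => A p.1 p.2 ≠ 1) (fun p => (p.2 - p.1).val)
    ⟨p, by simpa using hp⟩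
  refine ⟨i, j, by simpa using hij, fun i' j' h' => ?_⟩
  by_contra hne'
  exact (hmin (i', j') (by simpa using hne')).not_gt h'

variable [NeZero n]

/-- `hab` says that the cyclic distance between `a` and `b` is less than `s`. -/
theorem OneOnChordsBelow.apply_natCast {s : ℕ} (h : OneOnChordsBelow A s) (hA : Reciprocal A) {a b : ℕ} (ha : a < n)
    (hb : b < n) (hab : a < b + s ∧ b < a + s ∨ a + n < b + s ∨ b + n < a + s) :
    A a b = 1 := by
  have hfwd := Fin.val_natCast_sub_natCast ha hb
  have hbwd := Fin.val_natCast_sub_natCast hb ha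
  by_cases hf : ((b : Fin n) - a).val < s
  · exact h _ _ hf
  · exact (hA.apply_eq_one_iff _ _).mp (h _ _ (by split_ifs at hfwd hbwd <;> omega))

theorem Reciprocal.oneOnChordsBelow_two (hA : Reciprocal A) (hcyc : ∀ k : Fin n, A k (k + 1) = 1) :
    OneOnChordsBelow A 2 := by
  intro i j hij
  obtain h0 | h1 : (j - i).val = 0 ∨ (j - i).val = 1 := by omega
  · rw [sub_eq_zero.mp (Fin.ext h0 : j - i = 0), hA.apply_self_s19]
  · have : j - i = 1 := Fin.ext (by rw [h1, Fin.val_one', Nat.mod_eq_of_lt (by omega)])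
    rw [← hcyc i, ← this, add_sub_cancel]

def HasSubunitCycle (A : Matrix (Fin n) (Fin n) ℝ) : Prop :=
  ∃ γ : Fin n → Fin n, Function.Bijective γ ∧
    (∀ k, A (γ k) (γ (k + 1)) ≤ 1) ∧ ∃ k, A (γ k) (γ (k + 1)) < 1

theorem HasSubunitCycle.of_submatrix {e : Fin n → Fin n} (he : Function.Bijective e)
    (h : HasSubunitCycle (A.submatrix e e)) : HasSubunitCycle A :=
  let ⟨γ, hγ, hle, hlt⟩ := h
  ⟨e ∘ γ, he.comp hγ, hle, hlt⟩

/-- The cycle `δ 0 → δ 1 → ⋯ → δ (n - 1) → δ 0`, with vertices written as natural numbers. -/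
theorem hasSubunitCycle_of_nat (δ : ℕ → ℕ) (hδ : ∀ k < n, δ k < n)
    (hinj : ∀ k < n, ∀ l < n, δ k = δ l → k = l)
    (hstep : ∀ k, k + 1 < n → A (δ k) (δ (k + 1)) ≤ 1) (hlast : A (δ (n - 1)) (δ 0) ≤ 1)
    (hstrict : ∃ k, k + 1 < n ∧ A (δ k) (δ (k + 1)) < 1) : HasSubunitCycle A := by
  have hval : ∀ k < n, (δ k : Fin n).val = δ k := fun k hk => by
    rw [Fin.val_natCast, Nat.mod_eq_of_lt (hδ k hk)]
  refine ⟨fun k => δ k, ?_, fun k => ?_, ?_⟩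
  · refine Finite.injective_iff_bijective.mp fun k l hkl => Fin.ext (hinj _ k.isLt _ l.isLt ?_)
    simpa [hval _ k.isLt, hval _ l.isLt] using congrArg Fin.val hkl
  · dsimp only
    rw [Fin.val_add_one_eq_ite]
    split_ifs with hk
    · exact hstep _ hk
    · rwa [show k.val = n - 1 by omega]
  · obtain ⟨k, hk, hlt⟩ := hstrict
    refine ⟨⟨k, by omega⟩, ?_⟩
    simpa [Fin.val_add_one_eq_ite, hk] using hlt

/-- The cycle `0, s, s - 1, …, 3, 1, n - 1, n - 2, …, s + 1, 2`: after the chord `0 → s` every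
step goes back by `1`, `2` or `s - 1`. -/
def longChordCycle (n s k : ℕ) : ℕ :=
  if k = 0 then 0 else if k ≤ s - 2 then s + 1 - k else if k = s - 1 then 1
  else if k ≤ n - 2 then n + s - 1 - k else 2

theorem hasSubunitCycle_of_long_chord {s : ℕ} (hA : Reciprocal A) (h : OneOnChordsBelow A s)
    (hs : 3 ≤ s) (hsn : s + 2 ≤ n) (hchord : A 0 s < 1) : HasSubunitCycle A := by
  have hchord' : A (longChordCycle n s 0) (longChordCycle n s 1) < 1 := by
    rwa [show longChordCycle n s 1 = s by unfold longChordCycle; grind,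
      longChordCycle, if_pos rfl, Nat.cast_zero]
  refine hasSubunitCycle_of_nat (longChordCycle n s) ?_ ?_ (fun k hk => ?_) ?_ ⟨0, by omega, hchord'⟩
  · intro k hk; unfold longChordCycle; grind
  · intro k hk l hl; unfold longChordCycle; grind
  · rcases Nat.eq_zero_or_pos k with rfl | hk0
    · exact hchord'.le
    · refine (h.apply_natCast hA ?_ ?_ ?_).le <;> unfold longChordCycle <;> grind
  · refine (h.apply_natCast hA ?_ ?_ ?_).le <;> unfold longChordCycle <;> grind

/-- The cycle `0, 2, 1, 3, 4, …, n - 1`. -/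
def adjacentChordsCycle (k : ℕ) : ℕ :=
  if k = 1 then 2 else if k = 2 then 1 else k

theorem hasSubunitCycle_of_adjacent_chords (hA : Reciprocal A) (h : OneOnChordsBelow A 2)
    (hn : 4 ≤ n) (h0 : A 0 2 ≤ 1) (h1 : A 1 3 ≤ 1) (hlt : A 0 2 < 1 ∨ A 1 3 < 1) :
    HasSubunitCycle A := by
  have e0 : A (adjacentChordsCycle 0) (adjacentChordsCycle 1) = A 0 2 := by
    simp [adjacentChordsCycle]
  have e2 : A (adjacentChordsCycle 2) (adjacentChordsCycle 3) = A 1 3 := by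
    simp [adjacentChordsCycle]
  refine hasSubunitCycle_of_nat adjacentChordsCycle (by unfold adjacentChordsCycle; grind)
    (by unfold adjacentChordsCycle; grind) (fun k hk => ?_) ?_ ?_
  · by_cases hk0 : k = 0
    · rwa [hk0, e0]
    by_cases hk2 : k = 2
    · rwa [hk2, e2]
    refine (h.apply_natCast hA ?_ ?_ ?_).le <;> unfold adjacentChordsCycle <;> grind
  · refine (h.apply_natCast hA ?_ ?_ ?_).le <;> unfold adjacentChordsCycle <;> grind
  · rcases hlt with hlt | hlt
    · exact ⟨0, by omega, e0 ▸ hlt⟩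
    · exact ⟨2, by omega, e2 ▸ hlt⟩

/-- The cycle `0, 2, 4, …, 2m - 2, 2m - 1, 2m - 3, …, 3, 1`. -/
def zigzagCycle (m k : ℕ) : ℕ :=
  if k < m then 2 * k else 4 * m - 1 - 2 * k

theorem hasSubunitCycle_of_zigzag {m : ℕ} (hA : Reciprocal A) (h : OneOnChordsBelow A 2)
    (hm : 2 ≤ m) (hn : n = 2 * m) (heven : ∀ t : ℕ, A (2 * t) (2 * t + 2) ≤ 1)
    (hodd : ∀ t : ℕ, A (2 * t + 3) (2 * t + 1) ≤ 1) (h0 : A 0 2 < 1) : HasSubunitCycle A := by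
  have e0 : A (zigzagCycle m 0) (zigzagCycle m 1) = A 0 2 := by
    simp [zigzagCycle, show 0 < m by omega, show 1 < m by omega]
  refine hasSubunitCycle_of_nat (zigzagCycle m) (by unfold zigzagCycle; grind)
    (by unfold zigzagCycle; grind) (fun k hk => ?_) ?_ ⟨0, by omega, e0 ▸ h0⟩
  · rcases lt_trichotomy (k + 1) m with hkm | hkm | hkm
    · rw [zigzagCycle, if_pos (by omega), zigzagCycle, if_pos hkm]
      push_cast
      simpa [mul_add, add_assoc] using heven k
    · refine (h.apply_natCast hA ?_ ?_ ?_).le <;> unfold zigzagCycle <;> grind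
    · rw [zigzagCycle, if_neg (by omega), zigzagCycle, if_neg (by omega),
        show 4 * m - 1 - 2 * k = 2 * (2 * m - 2 - k) + 3 by omega,
        show 4 * m - 1 - 2 * (k + 1) = 2 * (2 * m - 2 - k) + 1 by omega]
      push_cast
      exact hodd _
  · refine (h.apply_natCast hA ?_ ?_ ?_).le <;> unfold zigzagCycle <;> grind

theorem hasSubunitCycle_of_adjacent_chords_le_one (hA : Reciprocal A)
    (h : OneOnChordsBelow A 2) (hn : 4 ≤ n) {q : Fin n} (h0 : A q (q + 2) ≤ 1)
    (h1 : A (q + 1) (q + 3) ≤ 1) (hlt : A q (q + 2) < 1 ∨ A (q + 1) (q + 3) < 1) :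
    HasSubunitCycle A := by
  refine .of_submatrix (e := (q + ·)) (add_right_injective q).bijective_of_finite
    (hasSubunitCycle_of_adjacent_chords (hA.submatrix _)
      (h.submatrix hA fun x y => .inl (add_sub_add_left_eq_sub y x q)) hn ?_ ?_ ?_)
  all_goals simpa using ‹_›

theorem hasSubunitCycle_of_adjacent_chords_one_le (hA : Reciprocal A)
    (h : OneOnChordsBelow A 2) (hn : 4 ≤ n) {q : Fin n} (h0 : 1 ≤ A q (q + 2))
    (h1 : 1 ≤ A (q + 1) (q + 3)) (hlt : 1 < A q (q + 2) ∨ 1 < A (q + 1) (q + 3)) :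
    HasSubunitCycle A := by
  rw [← hA.apply_le_one_iff] at h0 h1
  rw [← hA.apply_lt_one_iff, ← hA.apply_lt_one_iff] at hlt
  have e1 : q + 3 - 1 = q + 2 := by ring
  have e2 : q + 3 - 2 = q + 1 := by ring
  refine .of_submatrix (e := (q + 3 - ·)) sub_right_injective.bijective_of_finite
    (hasSubunitCycle_of_adjacent_chords (hA.submatrix _)
      (h.submatrix hA fun x y => .inr (sub_sub_sub_cancel_left x y (q + 3))) hn ?_ ?_ ?_)
  · simpa [e2] using h1
  · simpa [e1] using h0
  · simpa [e1, e2] using hlt.symm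

theorem hasSubunitCycle_of_alternating_chords (hA : Reciprocal A) (h : OneOnChordsBelow A 2)
    (hn : 4 ≤ n) (halt : ∀ t : ℕ, A (2 * t) (2 * t + 2) < 1 ∧ 1 < A (2 * t + 1) (2 * t + 3)) :
    HasSubunitCycle A := by
  have h0 : A 0 2 < 1 := by simpa using (halt 0).1
  obtain ⟨m, hm | hm⟩ := Nat.even_or_odd' n
  · refine hasSubunitCycle_of_zigzag hA h (by omega) hm (fun t => (halt t).1.le)
      (fun t => ?_) h0
    rw [hA.apply_le_one_iff]
    exact (halt t).2.le
  · have e1 : 2 * (m : Fin n) + 1 = 0 := by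
      have : ((2 * m + 1 : ℕ) : Fin n) = 0 := by rw [← hm]; simp
      exact_mod_cast this
    have e3 : 2 * (m : Fin n) + 3 = 2 := by linear_combination e1
    exact (h0.not_gt (by simpa [e1, e3] using (halt m).2)).elim

theorem hasSubunitCycle_of_chord_two (hA : Reciprocal A) (h : OneOnChordsBelow A 2)
    (hn : 4 ≤ n) (hchord : A 0 2 < 1) : HasSubunitCycle A := by
  set c : Fin n → ℝ := fun q => A q (q + 2) with hc
  have hc_succ (q : Fin n) : c (q + 1) = A (q + 1) (q + 3) := by simp only [hc]; ring_nf
  by_cases hdown : ∃ q, c q ≤ 1 ∧ c (q + 1) ≤ 1 ∧ (c q < 1 ∨ c (q + 1) < 1)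
  · obtain ⟨q, h0, h1, hlt⟩ := hdown
    rw [hc_succ] at h1 hlt
    exact hasSubunitCycle_of_adjacent_chords_le_one hA h hn h0 h1 hlt
  by_cases hup : ∃ q, 1 ≤ c q ∧ 1 ≤ c (q + 1) ∧ (1 < c q ∨ 1 < c (q + 1))
  · obtain ⟨q, h0, h1, hlt⟩ := hup
    rw [hc_succ] at h1 hlt
    exact hasSubunitCycle_of_adjacent_chords_one_le hA h hn h0 h1 hlt
  push Not at hdown hup
  have hfall : ∀ q, c q < 1 → 1 < c (q + 1) := fun q hq =>
    lt_of_not_ge fun hq' => (hdown q hq.le hq').1.not_gt hq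
  have hrise : ∀ q, 1 < c q → c (q + 1) < 1 := fun q hq =>
    lt_of_not_ge fun hq' => (hup q hq.le hq').1.not_gt hq
  refine hasSubunitCycle_of_alternating_chords hA h hn fun t => ?_
  rw [← hc_succ]
  induction t with
  | zero =>
    have hc0 : c 0 < 1 := by simpa [hc] using hchord
    exact ⟨by simpa using hchord, by simpa using hfall 0 hc0⟩
  | succ t ih =>
    have e : (2 * (t + 1 : ℕ) : Fin n) = 2 * t + 1 + 1 := by push_cast; ring
    have hlt := hrise _ ih.2
    rw [← e] at hlt
    exact ⟨hlt, hfall _ hlt⟩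

theorem hasSubunitCycle_of_chord_lt_one {s : ℕ} (hA : Reciprocal A) (h : OneOnChordsBelow A s)
    (hs : 2 ≤ s) (hsn : s < n) (hchord : A 0 s < 1) : HasSubunitCycle A := by
  have hsn' : s + 2 ≤ n := by
    by_contra hsn'
    have : A ((0 : ℕ) : Fin n) s = 1 := h.apply_natCast hA (by omega) hsn (by omega)
    rw [Nat.cast_zero] at this
    exact hchord.ne this
  obtain rfl | hs := hs.eq_or_lt
  · exact hasSubunitCycle_of_chord_two hA h hsn' (by simpa using hchord)
  · exact hasSubunitCycle_of_long_chord hA h hs hsn' hchord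

theorem hasSubunitCycle_of_chord_ne_one {i j : Fin n} (hA : Reciprocal A)
    (h : OneOnChordsBelow A (j - i).val) (hs : 2 ≤ (j - i).val) (hij : A i j ≠ 1) :
    HasSubunitCycle A := by
  rcases hij.lt_or_gt with hlt | hgt
  · refine .of_submatrix (e := (i + ·)) (add_right_injective i).bijective_of_finite
      (hasSubunitCycle_of_chord_lt_one (hA.submatrix _)
        (h.submatrix hA fun x y => .inl (add_sub_add_left_eq_sub y x i)) hs (j - i).isLt ?_)
    simpa using hlt
  · refine .of_submatrix (e := (j - ·)) sub_right_injective.bijective_of_finite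
      (hasSubunitCycle_of_chord_lt_one (hA.submatrix _)
        (h.submatrix hA fun x y => .inr (sub_sub_sub_cancel_left x y j)) hs (j - i).isLt ?_)
    simpa [← hA.apply_lt_one_iff] using hgt

end

/-- If `A` is an inconsistent reciprocal matrix all of whose entries along the
standard Hamiltonian cycle `1 → 2 → ⋯ → n → 1` equal `1`, then there is a
Hamiltonian cycle `C'` with all entries of `A` along `C'` at most `1` and at
least one entry strictly less than `1`. -/
theorem stmt19 {n : ℕ} [NeZero n] (A : Matrix (Fin n) (Fin n) ℝ) (hA : Reciprocal A)
    (hinc : ¬ Consistent A)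
    (hcyc : ∀ k : Fin n, A k (k + 1) = 1) :
    ∃ γ : Fin n → Fin n, Function.Bijective γ ∧
      (∀ k : Fin n, A (γ k) (γ (k + 1)) ≤ 1) ∧
      ∃ k : Fin n, A (γ k) (γ (k + 1)) < 1 := by
  obtain ⟨i, j, hij, hmin⟩ := exists_apply_ne_one_oneOnChordsBelow hinc
  have hs : 2 ≤ (j - i).val := by
    by_contra! hs
    exact hij (hA.oneOnChordsBelow_two hcyc i j hs)
  exact hasSubunitCycle_of_chord_ne_one hA hmin hs hij
end
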